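/- arXiv:1910.01496 — 5 statements merged into one kernel-verified Lean document; each statement's English description precedes it below -/
import Mathlib

section
/- Let K be a field with a valuation v : K → Γ₀, let 𝒪 be its valuation ring and 𝔪 the maximal ideal of 𝒪, and assume 𝒪 ≠ K. Let k ⊆ 𝒪 be a subfield with k ∩ 𝔪 = {0}. Let μ ⊆ SL₂(K) be the set of matrices m with all entries in 𝒪 such that every entry of m − I lies in 𝔪, and let P = { [[x, 1], [0, x⁻¹]] : x ∈ K \ 𝒪 } ⊆ SL₂(K). Then the set of matrices g ∈ SL₂(K) with all entries in k satisfying g·(μ·P) = μ·P is exactly { [[1, b], [0, 1]] : b ∈ k }. -/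
/-!
Write `p(x) = [[x, 1], [0, x⁻¹]]`. If `g` has entries in `k` and stabilises `μ·P`, then
`g·p(x) = m·p(y)` with `m ∈ μ` and `v x, v y > 1`; comparing second columns shows that the first
column of `g` is `(1, 0)` modulo `𝔪`, hence equal to `(1, 0)` because `k ∩ 𝔪 = 0`, and `det g = 1`
makes `g` unipotent. Conversely, for `u = [[1, b], [0, 1]]` with `b ∈ 𝒪` one has
`u·p(x) = diag(t, t⁻¹)·p(x/t)` with `t = 1 + b/x ∈ 1 + 𝔪`, and `u` normalises the kernel of
reduction `μ`, so `u·μ·P ⊆ μ·P`; the same applied to `u⁻¹` gives equality.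
-/

open Pointwise Matrix MatrixGroups

namespace Matrix

theorem eq_unipotent_of_det_eq_one {R : Type*} [CommRing R] {G : Matrix (Fin 2) (Fin 2) R}
    (hdet : G.det = 1) (h00 : G 0 0 = 1) (h10 : G 1 0 = 0) : G = !![1, G 0 1; 0, 1] := by
  rw [det_fin_two, h00, h10] at hdet
  ext i j
  fin_cases i <;> fin_cases j <;> simp [h00, h10]
  linear_combination hdet

theorem unipotent_mul_curve {K : Type*} [Field K] {b x : K} (hx : x ≠ 0) (hxb : x + b ≠ 0) :
    !![1, b; 0, 1] * !![x, 1; 0, x⁻¹] =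
      !![(x + b) / x, 0; 0, x / (x + b)] * !![x ^ 2 / (x + b), 1; 0, (x ^ 2 / (x + b))⁻¹] := by
  rw [mul_fin_two, mul_fin_two]
  ext i j
  fin_cases i <;> fin_cases j <;> simp <;> field_simp

end Matrix

namespace Valuation

variable {Γ₀ : Type*} [LinearOrderedCommGroupWithZero Γ₀]

section MatrixEntries

variable {R : Type*} [CommRing R] (v : Valuation R Γ₀) {n : Type*}

def EntriesLeOne (A : Matrix n n R) : Prop := ∀ i j, v (A i j) ≤ 1

def EntriesLtOne (A : Matrix n n R) : Prop := ∀ i j, v (A i j) < 1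

variable {v} {A B : Matrix n n R}

theorem EntriesLtOne.entriesLeOne (hA : v.EntriesLtOne A) : v.EntriesLeOne A :=
  fun i j => (hA i j).le

theorem EntriesLeOne.add (hA : v.EntriesLeOne A) (hB : v.EntriesLeOne B) :
    v.EntriesLeOne (A + B) :=
  fun i j => v.map_add_le (hA i j) (hB i j)

theorem EntriesLtOne.add (hA : v.EntriesLtOne A) (hB : v.EntriesLtOne B) :
    v.EntriesLtOne (A + B) :=
  fun i j => v.map_add_lt (hA i j) (hB i j)

theorem EntriesLtOne.neg (hA : v.EntriesLtOne A) : v.EntriesLtOne (-A) :=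
  fun i j => by simpa using hA i j

theorem entriesLeOne_one [DecidableEq n] : v.EntriesLeOne (1 : Matrix n n R) := by
  intro i j
  rw [one_apply]
  split_ifs <;> simp

theorem entriesLeOne_of_entriesLtOne_sub_one [DecidableEq n] (hA : v.EntriesLtOne (A - 1)) :
    v.EntriesLeOne A := by
  simpa using hA.entriesLeOne.add entriesLeOne_one

variable [Fintype n]

theorem EntriesLeOne.mul_entriesLtOne (hA : v.EntriesLeOne A) (hB : v.EntriesLtOne B) :
    v.EntriesLtOne (A * B) :=
  fun i j => v.map_sum_lt one_ne_zero fun k _ => by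
    rw [map_mul]; exact mul_lt_one_of_nonneg_of_lt_one_right (hA i k) zero_le (hB k j)

theorem EntriesLtOne.mul_entriesLeOne (hA : v.EntriesLtOne A) (hB : v.EntriesLeOne B) :
    v.EntriesLtOne (A * B) :=
  fun i j => v.map_sum_lt one_ne_zero fun k _ => by
    rw [map_mul]; exact mul_lt_one_of_lt_of_le (hA i k) (hB k j)

variable [DecidableEq n]

theorem EntriesLeOne.adjugate (hA : v.EntriesLeOne A) : v.EntriesLeOne A.adjugate := by
  let A' : Matrix n n v.integer := fun i j => ⟨A i j, hA i j⟩
  have hA' : v.integer.subtype.mapMatrix A' = A := rfl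
  intro i j
  rw [← hA', ← RingHom.map_adjugate]
  exact (A'.adjugate i j).2

local notation:1024 "↑ₘ" A:1024 => ((A : SpecialLinearGroup n R) : Matrix n n R)

variable (v n) in
def reductionKernel : Subgroup (SpecialLinearGroup n R) where
  carrier := {m : SpecialLinearGroup n R | v.EntriesLtOne (↑ₘm - 1)}
  one_mem' := by simp [EntriesLtOne]
  mul_mem' {a b} ha hb := by
    have key : ↑ₘa * ↑ₘb - 1 = (↑ₘa - 1) * ↑ₘb + (↑ₘb - 1) := by noncomm_ring
    simpa [key] using (ha.mul_entriesLeOne (entriesLeOne_of_entriesLtOne_sub_one hb)).add hb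
  inv_mem' {a} ha := by
    change v.EntriesLtOne ((↑ₘa).adjugate - 1)
    have key : (↑ₘa).adjugate - 1 = (↑ₘa).adjugate * -(↑ₘa - 1) := by
      rw [mul_neg, mul_sub, adjugate_mul, a.2]; simp
    rw [key]
    exact (entriesLeOne_of_entriesLtOne_sub_one ha).adjugate.mul_entriesLtOne ha.neg

theorem mem_reductionKernel_iff {m : SpecialLinearGroup n R} :
    m ∈ reductionKernel v n ↔ ∀ i j, v (↑ₘm i j) ≤ 1 ∧ v ((↑ₘm - 1) i j) < 1 :=
  ⟨fun h i j => ⟨entriesLeOne_of_entriesLtOne_sub_one h i j, h i j⟩, fun h i j => (h i j).2⟩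

theorem conj_mem_reductionKernel {g m : SpecialLinearGroup n R} (hg : v.EntriesLeOne ↑ₘg)
    (hm : m ∈ reductionKernel v n) : g * m * g⁻¹ ∈ reductionKernel v n := by
  change v.EntriesLtOne (↑ₘg * ↑ₘm * (↑ₘg).adjugate - 1)
  have key : ↑ₘg * ↑ₘm * (↑ₘg).adjugate - 1 = ↑ₘg * (↑ₘm - 1) * (↑ₘg).adjugate := by
    rw [mul_sub, sub_mul, mul_one, mul_adjugate, g.2, one_smul]
  rw [key]
  exact (hg.mul_entriesLtOne hm).mul_entriesLeOne hg.adjugate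

end MatrixEntries

section SL2

variable {K : Type*} [Field K] {v : Valuation K Γ₀}

local notation:1024 "↑ₘ" A:1024 => ((A : SL(2, K)) : Matrix (Fin 2) (Fin 2) K)

theorem ne_zero_of_one_lt {x : K} (hx : 1 < v x) : x ≠ 0 :=
  v.ne_zero_iff.mp (zero_lt_one.trans hx).ne'

theorem map_div_lt_one {a x : K} (ha : v a ≤ 1) (hx : 1 < v x) : v (a / x) < 1 := by
  rw [map_div₀]
  exact (div_le_div_of_nonneg_right ha zero_le).trans_lt
    ((div_lt_one₀ (zero_lt_one.trans hx)).mpr hx)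

variable (v) in
def curveOutsideInteger : Set SL(2, K) :=
  {m | ∃ x : K, 1 < v x ∧ ↑ₘm = !![x, 1; 0, x⁻¹]}

theorem exists_mem_curveOutsideInteger {x : K} (hx : 1 < v x) :
    ∃ p ∈ curveOutsideInteger v, ↑ₘp = !![x, 1; 0, x⁻¹] :=
  ⟨⟨!![x, 1; 0, x⁻¹], by simp [det_fin_two_of, ne_zero_of_one_lt hx]⟩, ⟨x, hx, rfl⟩, rfl⟩

theorem entriesLtOne_diag_sub_one {b x : K} (hb : v b ≤ 1) (hx : 1 < v x) :
    v.EntriesLtOne (!![(x + b) / x, 0; 0, x / (x + b)] - 1) := by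
  have hx0 := ne_zero_of_one_lt hx
  have hvxb : v (x + b) = v x := v.map_add_eq_of_lt_left (hb.trans_lt hx)
  have hxb0 := ne_zero_of_one_lt (hvxb ▸ hx)
  have h00 : (x + b) / x - 1 = b / x := by field_simp; ring
  have h11 : x / (x + b) - 1 = -b / (x + b) := by field_simp; ring
  intro i j
  fin_cases i <;> fin_cases j <;> simp [h00, h11]
  · simpa using map_div_lt_one hb hx
  · simpa using map_div_lt_one hb (hvxb ▸ hx)

theorem smul_reductionKernel_mul_curve_subset {g : SL(2, K)} {b : K} (hb : v b ≤ 1)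
    (hg : ↑ₘg = !![1, b; 0, 1]) :
    g • ((reductionKernel v (Fin 2) : Set SL(2, K)) * curveOutsideInteger v) ⊆
      reductionKernel v (Fin 2) * curveOutsideInteger v := by
  rintro _ ⟨_, ⟨m, hm, p, ⟨x, hx, hp⟩, rfl⟩, rfl⟩
  have hvxb : v (x + b) = v x := v.map_add_eq_of_lt_left (hb.trans_lt hx)
  have hy : 1 < v (x ^ 2 / (x + b)) := by
    rwa [map_div₀, map_pow, hvxb, sq, mul_div_cancel_right₀ _ (zero_lt_one.trans hx).ne']
  obtain ⟨p', hp'P, hp'⟩ := exists_mem_curveOutsideInteger hy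
  have hd : ↑ₘ(g * p * p'⁻¹) = !![(x + b) / x, 0; 0, x / (x + b)] := by
    have hp'inv : ↑ₘp' * ↑ₘp'⁻¹ = 1 := by
      simp only [← Matrix.SpecialLinearGroup.coe_mul, mul_inv_cancel,
        Matrix.SpecialLinearGroup.coe_one]
    simp only [Matrix.SpecialLinearGroup.coe_mul, hg, hp]
    rw [unipotent_mul_curve (ne_zero_of_one_lt hx) (ne_zero_of_one_lt (hvxb ▸ hx)), ← hp',
      mul_assoc, hp'inv, mul_one]
  have hgint : v.EntriesLeOne ↑ₘg := by
    rw [hg]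
    intro i j
    fin_cases i <;> fin_cases j <;> simp [hb]
  refine ⟨g * m * g⁻¹ * (g * p * p'⁻¹), mul_mem (conj_mem_reductionKernel hgint hm) ?_, p', hp'P,
    by simp only [smul_eq_mul]; group⟩
  change v.EntriesLtOne (↑ₘ(g * p * p'⁻¹) - 1)
  exact hd ▸ entriesLtOne_diag_sub_one hb hx

theorem smul_reductionKernel_mul_curve {g : SL(2, K)} {b : K} (hb : v b ≤ 1)
    (hg : ↑ₘg = !![1, b; 0, 1]) :
    g • ((reductionKernel v (Fin 2) : Set SL(2, K)) * curveOutsideInteger v) =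
      reductionKernel v (Fin 2) * curveOutsideInteger v := by
  have hg' : ↑ₘg⁻¹ = !![1, -b; 0, 1] := by
    rw [Matrix.SpecialLinearGroup.coe_inv, hg, adjugate_fin_two_of, neg_zero]
  refine (smul_reductionKernel_mul_curve_subset hb hg).antisymm ?_
  exact Set.subset_smul_set_iff.mpr
    (smul_reductionKernel_mul_curve_subset (by rwa [v.map_neg]) hg')

theorem sub_one_apply_zero_lt_one {M G : Matrix (Fin 2) (Fin 2) K} {x y : K}
    (hM : v.EntriesLtOne (M - 1)) (hG : v.EntriesLeOne G) (hx : 1 < v x) (hy : 1 < v y)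
    (h : M * !![y, 1; 0, y⁻¹] = G * !![x, 1; 0, x⁻¹]) (i : Fin 2) :
    v ((G - 1) i 0) < 1 := by
  have hcol : M i 0 + M i 1 / y = G i 0 + G i 1 / x := by
    simpa [mul_apply, Fin.sum_univ_two, div_eq_mul_inv] using congrFun (congrFun h i) 1
  have key : (G - 1) i 0 = (M - 1) i 0 + M i 1 / y - G i 1 / x := by
    simp only [Matrix.sub_apply]; linear_combination -hcol
  rw [key]
  exact v.map_sub_lt (v.map_add_lt (hM i 0)
    (map_div_lt_one (entriesLeOne_of_entriesLtOne_sub_one hM i 1) hy))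
    (map_div_lt_one (hG i 1) hx)

end SL2

end Valuation

open Valuation

/-- The `μ`-stabilizer (over a lifted residue field `k`) of the tube `μ·P` around the
type at infinity of the curve `x ↦ [[x,1],[0,x⁻¹]]` in `SL₂` is the group of upper
unitriangular matrices with entries in `k`. -/
theorem mu_stabilizer_unipotent
    {K Γ₀ : Type*} [Field K] [LinearOrderedCommGroupWithZero Γ₀]
    (v : Valuation K Γ₀) (hnt : ∃ x : K, 1 < v x)
    (k : Subfield K) (hkO : ∀ a ∈ k, v a ≤ 1) (hkm : ∀ a ∈ k, v a < 1 → a = 0)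
    (μ P : Set (Matrix.SpecialLinearGroup (Fin 2) K))
    (hμ : μ = {m : Matrix.SpecialLinearGroup (Fin 2) K |
        ∀ i j, v ((m : Matrix (Fin 2) (Fin 2) K) i j) ≤ 1 ∧
          v (((m : Matrix (Fin 2) (Fin 2) K) - 1) i j) < 1})
    (hP : P = {m : Matrix.SpecialLinearGroup (Fin 2) K |
        ∃ x : K, 1 < v x ∧ (m : Matrix (Fin 2) (Fin 2) K) = !![x, 1; 0, x⁻¹]}) :
    {g : Matrix.SpecialLinearGroup (Fin 2) K |
        (∀ i j, (g : Matrix (Fin 2) (Fin 2) K) i j ∈ k) ∧ g • (μ * P) = μ * P}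
      = {g : Matrix.SpecialLinearGroup (Fin 2) K |
          ∃ b ∈ k, (g : Matrix (Fin 2) (Fin 2) K) = !![1, b; 0, 1]} := by
  obtain rfl : μ = reductionKernel v (Fin 2) :=
    hμ.trans (Set.ext fun _ => mem_reductionKernel_iff.symm)
  obtain rfl : P = curveOutsideInteger v := hP
  ext g
  constructor
  · rintro ⟨hgk, hg⟩
    obtain ⟨x, hx⟩ := hnt
    obtain ⟨p₀, hp₀P, hp₀⟩ := exists_mem_curveOutsideInteger hx
    have hgp₀ : g * p₀ ∈ (reductionKernel v (Fin 2) : Set _) * curveOutsideInteger v :=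
      hg ▸ Set.smul_mem_smul_set (one_mul p₀ ▸ Set.mul_mem_mul (one_mem _) hp₀P)
    obtain ⟨m, hm, p, ⟨y, hy, hp⟩, hmp⟩ := hgp₀
    have hcol := sub_one_apply_zero_lt_one hm (fun i j => hkO _ (hgk i j)) hx hy
      (by rw [← hp, ← hp₀, ← Matrix.SpecialLinearGroup.coe_mul,
        ← Matrix.SpecialLinearGroup.coe_mul]; exact congrArg _ hmp)
    have h00 : g 0 0 = 1 :=
      sub_eq_zero.mp (hkm _ (k.sub_mem (hgk 0 0) k.one_mem) (by simpa using hcol 0))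
    have h10 : g 1 0 = 0 := hkm _ (hgk 1 0) (by simpa using hcol 1)
    exact ⟨_, hgk 0 1, eq_unipotent_of_det_eq_one g.2 h00 h10⟩
  · rintro ⟨b, hb, hg⟩
    refine ⟨fun i j => ?_, smul_reductionKernel_mul_curve (hkO b hb) hg⟩
    rw [hg]
    fin_cases i <;> fin_cases j <;> simp [hb, k.one_mem, k.zero_mem]
end

section
/- Let K be a field with a valuation v : K → Γ₀, let 𝒪 be its valuation ring and 𝔪 the maximal ideal of 𝒪, and assume 𝒪 ≠ K. Let k ⊆ 𝒪 be a subfield with k ∩ 𝔪 = {0}. Let μ ⊆ SL₂(K) be the set of matrices m with all entries in 𝒪 such that every entry of m − I lies in 𝔪, and let Q = { [[x, 0], [1, x⁻¹]] : x ∈ K \ 𝒪 } ⊆ SL₂(K). Then the set of matrices g ∈ SL₂(K) with all entries in k satisfying g·(μ·Q) = μ·Q is exactly { [[a, 0], [0, a⁻¹]] : a ∈ k, a ≠ 0 }. -/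
/-!
For `v a = 1`, conjugation by `diag(a, a⁻¹)` preserves `μ`, and `diag(a, a⁻¹)` moves the
point `q x = [[x, 0], [1, x⁻¹]]` of `Q` to a lower unipotent element of `μ` times `q (a x)`,
where `v (a x) = v x > 1`; applied to `a` and `a⁻¹` this shows that the torus stabilizes `μ·Q`.
Conversely, write `g = [[a, b], [c, d]]` with entries in `k`, so that each entry is `0` or a
unit of `𝒪`. If `g q x = m q y` with `m ∈ μ`, the second column gives `d x⁻¹ = m₁₁ y⁻¹` and
`b x⁻¹ = m₀₁ y⁻¹`, so `v y = v x` and `v b < 1`; the first column gives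
`c x = m₁₀ y + (m₁₁ - d)`, whose right side has valuation `< v x`, so `v c < 1`.
Hence `b = c = 0`, and `det g = 1` forces `d = a⁻¹`.
-/

open Pointwise Matrix
open scoped MatrixGroups

namespace Matrix.SpecialLinearGroup

variable {K : Type*} [Field K]

theorem coe_inv_eq_diagonal {n : Type*} [Fintype n] [DecidableEq n]
    {g : Matrix.SpecialLinearGroup n K} {d : n → K} (hd : ∀ i, d i ≠ 0)
    (hg : (g : Matrix n n K) = diagonal d) :
    ((g⁻¹ : Matrix.SpecialLinearGroup n K) : Matrix n n K) = diagonal d⁻¹ :=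
  calc ((g⁻¹ : Matrix.SpecialLinearGroup n K) : Matrix n n K)
      = ↑g⁻¹ * (↑g * diagonal d⁻¹) := by
        rw [hg, (by simp [hd] : diagonal d * diagonal d⁻¹ = 1), mul_one]
    _ = diagonal d⁻¹ := by
      rw [← mul_assoc, ← Matrix.SpecialLinearGroup.coe_mul, inv_mul_cancel,
        Matrix.SpecialLinearGroup.coe_one, one_mul]

theorem coe_fin_two_eq_of_offDiag_eq_zero {g : SL(2, K)}
    (h01 : (g : Matrix (Fin 2) (Fin 2) K) 0 1 = 0)
    (h10 : (g : Matrix (Fin 2) (Fin 2) K) 1 0 = 0) :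
    (g : Matrix (Fin 2) (Fin 2) K) =
      !![(g : Matrix (Fin 2) (Fin 2) K) 0 0, 0; 0, ((g : Matrix (Fin 2) (Fin 2) K) 0 0)⁻¹] := by
  have hdet := g.2
  rw [det_fin_two, h01, h10, mul_zero, sub_zero] at hdet
  rw [← eq_inv_of_mul_eq_one_right hdet]
  ext i j
  fin_cases i <;> fin_cases j <;> simp [h01, h10]

end Matrix.SpecialLinearGroup

section CurvePoint

variable {K : Type*} [Field K]

def curvePoint (x : Kˣ) : SL(2, K) :=
  ⟨!![(x : K), 0; 1, (x : K)⁻¹], by simp [det_fin_two_of]⟩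

theorem diag_mul_curvePoint (a x : Kˣ) {g : SL(2, K)}
    (hg : (g : Matrix (Fin 2) (Fin 2) K) = !![(a : K), 0; 0, (a : K)⁻¹]) :
    g * curvePoint x = SpecialLinearGroup.transvection (one_ne_zero : (1 : Fin 2) ≠ 0)
      ((x : K)⁻¹ * ((a : K)⁻¹ * (a : K)⁻¹ - (a : K)⁻¹)) * curvePoint (a * x) := by
  apply Subtype.ext
  rw [Matrix.SpecialLinearGroup.coe_mul, Matrix.SpecialLinearGroup.coe_mul, hg,
    SpecialLinearGroup.transvection_coe]
  ext i j
  fin_cases i <;> fin_cases j <;> simp [curvePoint, mul_apply, Fin.sum_univ_two] <;>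
    field_simp
  ring

end CurvePoint

namespace Valuation

variable {Γ₀ : Type*} [LinearOrderedCommGroupWithZero Γ₀]

section CongruenceKernel

variable {R : Type*} [CommRing R] (v : Valuation R Γ₀) {n : Type*} [DecidableEq n]

theorem val_apply_le_one_of_val_sub_one_lt {M : Matrix n n R} {i j : n}
    (h : v ((M - 1) i j) < 1) : v (M i j) ≤ 1 := by
  have hM : M i j = (M - 1) i j + (1 : Matrix n n R) i j := by simp
  rw [hM]
  refine v.map_add_le h.le ?_
  rw [one_apply]
  split_ifs <;> simp

variable [Fintype n]

theorem val_mul_sub_one_lt {A B : Matrix n n R} (hA : ∀ i j, v ((A - 1) i j) < 1)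
    (hB : ∀ i j, v ((B - 1) i j) < 1) (i j : n) : v ((A * B - 1) i j) < 1 := by
  have hAB : A * B - 1 = (A - 1) * (B - 1) + (A - 1) + (B - 1) := by noncomm_ring
  rw [hAB, Matrix.add_apply, Matrix.add_apply, mul_apply]
  refine v.map_add_lt (v.map_add_lt (v.map_sum_lt one_ne_zero fun l _ => ?_) (hA i j)) (hB i j)
  rw [v.map_mul]
  exact Left.mul_lt_one' (hA i l) (hB l j)

variable (n)

def congrKernel : Submonoid (Matrix.SpecialLinearGroup n R) where
  carrier :=
    {m | ∀ i j, v ((m : Matrix n n R) i j) ≤ 1 ∧ v (((m : Matrix n n R) - 1) i j) < 1}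
  one_mem' i j := by simp [one_apply]; split_ifs <;> simp
  mul_mem' {A B} hA hB i j :=
    have h := v.val_mul_sub_one_lt (fun i j => (hA i j).2) (fun i j => (hB i j).2) i j
    ⟨v.val_apply_le_one_of_val_sub_one_lt h, h⟩

variable {n}

theorem mem_congrKernel {m : Matrix.SpecialLinearGroup n R} :
    m ∈ v.congrKernel n ↔ ∀ i j, v (((m : Matrix n n R) - 1) i j) < 1 :=
  ⟨fun h i j => (h i j).2, fun h i j => ⟨v.val_apply_le_one_of_val_sub_one_lt (h i j), h i j⟩⟩

theorem transvection_mem_congrKernel {i j : n} (hij : i ≠ j) {c : R} (hc : v c < 1) :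
    SpecialLinearGroup.transvection hij c ∈ v.congrKernel n := by
  rw [mem_congrKernel]
  intro k l
  rw [SpecialLinearGroup.transvection_coe, add_sub_cancel_left, single_apply]
  split_ifs <;> simp [hc]

end CongruenceKernel

variable {K : Type*} [Field K] (v : Valuation K Γ₀)

section Diagonal

variable {n : Type*} [Fintype n] [DecidableEq n]

theorem val_diagonal_mul_mul_diagonal_inv_sub_one_lt {d : n → K} (hd : ∀ i, v (d i) = 1)
    {M : Matrix n n K} (hM : ∀ i j, v ((M - 1) i j) < 1) (i j : n) :
    v ((diagonal d * M * diagonal d⁻¹ - 1) i j) < 1 := by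
  have hd0 : ∀ i, d i ≠ 0 := fun i h => by simpa [h] using hd i
  have hentry : (diagonal d * M * diagonal d⁻¹ - 1) i j = d i * (M - 1) i j * (d j)⁻¹ := by
    rcases eq_or_ne i j with rfl | hij
    · simp [diagonal_mul, mul_diagonal, hd0, sub_mul, mul_sub]
    · simp [diagonal_mul, mul_diagonal, hij]
  rw [hentry, v.map_mul, v.map_mul, map_inv₀, hd, hd, inv_one, one_mul, mul_one]
  exact hM i j

theorem mul_mul_inv_mem_congrKernel_of_coe_eq_diagonal {g m : Matrix.SpecialLinearGroup n K}
    {d : n → K} (hd : ∀ i, v (d i) = 1) (hg : (g : Matrix n n K) = diagonal d)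
    (hm : m ∈ v.congrKernel n) : g * m * g⁻¹ ∈ v.congrKernel n := by
  have hd0 : ∀ i, d i ≠ 0 := fun i h => by simpa [h] using hd i
  rw [mem_congrKernel] at hm ⊢
  rw [Matrix.SpecialLinearGroup.coe_mul, Matrix.SpecialLinearGroup.coe_mul,
    Matrix.SpecialLinearGroup.coe_inv_eq_diagonal hd0 hg, hg]
  exact v.val_diagonal_mul_mul_diagonal_inv_sub_one_lt hd hm

end Diagonal

def curveNearInfinity : Set SL(2, K) :=
  {m | ∃ x : K, 1 < v x ∧ (m : Matrix (Fin 2) (Fin 2) K) = !![x, 0; 1, x⁻¹]}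

theorem mem_curveNearInfinity {m : SL(2, K)} :
    m ∈ v.curveNearInfinity ↔ ∃ x : Kˣ, 1 < v x ∧ m = curvePoint x := by
  constructor
  · rintro ⟨x, hx, hm⟩
    have hx0 : x ≠ 0 := by rintro rfl; simp at hx
    exact ⟨Units.mk0 x hx0, hx, Subtype.ext hm⟩
  · rintro ⟨x, hx, rfl⟩
    exact ⟨x, hx, rfl⟩

theorem offDiag_eq_zero_of_mul_curvePoint_eq {g m : SL(2, K)}
    (hg : ∀ i j, (g : Matrix (Fin 2) (Fin 2) K) i j = 0 ∨
      v ((g : Matrix (Fin 2) (Fin 2) K) i j) = 1)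
    (hm : m ∈ v.congrKernel (Fin 2)) {x y : Kˣ} (hx : 1 < v x)
    (h : g * curvePoint x = m * curvePoint y) :
    (g : Matrix (Fin 2) (Fin 2) K) 0 1 = 0 ∧ (g : Matrix (Fin 2) (Fin 2) K) 1 0 = 0 := by
  have hE : (g : Matrix (Fin 2) (Fin 2) K) * (curvePoint x : Matrix (Fin 2) (Fin 2) K) =
      (m : Matrix (Fin 2) (Fin 2) K) * (curvePoint y : Matrix (Fin 2) (Fin 2) K) := by
    rw [← Matrix.SpecialLinearGroup.coe_mul, h, Matrix.SpecialLinearGroup.coe_mul]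
  have e01 : g 0 1 * (x : K)⁻¹ = m 0 1 * (y : K)⁻¹ := by
    simpa [curvePoint, mul_apply, Fin.sum_univ_two] using congrFun₂ hE 0 1
  have e11 : g 1 1 * (x : K)⁻¹ = m 1 1 * (y : K)⁻¹ := by
    simpa [curvePoint, mul_apply, Fin.sum_univ_two] using congrFun₂ hE 1 1
  have e10 : g 1 0 * x + g 1 1 = m 1 0 * y + m 1 1 := by
    simpa [curvePoint, mul_apply, Fin.sum_univ_two] using congrFun₂ hE 1 0
  rw [mem_congrKernel] at hm
  have hm01 : v (m 0 1) < 1 := by simpa using hm 0 1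
  have hm10 : v (m 1 0) < 1 := by simpa using hm 1 0
  have hm11 : v (m 1 1) = 1 := by
    simpa using v.map_one_add_of_lt (by simpa using hm 1 1 : v (m 1 1 - 1) < 1)
  have hvx : v x ≠ 0 := by simp
  have hg11 : v (g 1 1) = 1 := (hg 1 1).resolve_left fun h0 => by
    simp [h0, (v.ne_zero_iff).1 (hm11.trans_ne one_ne_zero)] at e11
  have hvy : v y = v x := by
    simpa [hg11, hm11] using (congrArg v e11).symm
  have hv01 : v (g 0 1) < 1 := by
    have hv := congrArg v e01
    rw [v.map_mul, v.map_mul, map_inv₀, map_inv₀, hvy] at hv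
    rw [mul_right_cancel₀ (inv_ne_zero hvx) hv]
    exact hm01
  have hv10 : v (g 1 0) < 1 := by
    have e10' : g 1 0 * x = m 1 0 * y + (m 1 1 - g 1 1) := by linear_combination e10
    have hrhs : v (m 1 0 * y + (m 1 1 - g 1 1)) < v x := by
      refine v.map_add_lt ?_ ((v.map_sub _ _).trans_lt ?_)
      · rw [v.map_mul, hvy]
        exact mul_lt_of_lt_one_left (zero_lt_iff.2 hvx) hm10
      · rw [hm11, hg11, max_self]
        exact hx
    rw [← e10', v.map_mul] at hrhs
    exact (mul_lt_iff_lt_one_left (zero_lt_iff.2 hvx)).1 hrhs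
  exact ⟨(hg 0 1).resolve_right hv01.ne, (hg 1 0).resolve_right hv10.ne⟩

theorem smul_congrKernel_mul_curveNearInfinity_subset {g : SL(2, K)} {a : K} (ha : v a = 1)
    (hg : (g : Matrix (Fin 2) (Fin 2) K) = !![a, 0; 0, a⁻¹]) :
    g • ((v.congrKernel (Fin 2) : Set SL(2, K)) * v.curveNearInfinity) ⊆
      (v.congrKernel (Fin 2) : Set SL(2, K)) * v.curveNearInfinity := by
  have ha0 : a ≠ 0 := by rintro rfl; simp at ha
  rintro _ ⟨_, ⟨m, hm, q, hq, rfl⟩, rfl⟩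
  obtain ⟨x, hx, rfl⟩ := v.mem_curveNearInfinity.1 hq
  have hvx : v (x : K)⁻¹ < 1 := (v.one_lt_val_iff x.ne_zero).1 hx
  have hconj : g * m * g⁻¹ ∈ v.congrKernel (Fin 2) :=
    v.mul_mul_inv_mem_congrKernel_of_coe_eq_diagonal (d := ![a, a⁻¹])
      (Fin.forall_fin_two.2 ⟨ha, by simp [ha]⟩) (hg.trans (diagonal_vec2 _ _).symm) hm
  have htrans := v.transvection_mem_congrKernel (one_ne_zero : (1 : Fin 2) ≠ 0)
    (c := (x : K)⁻¹ * (a⁻¹ * a⁻¹ - a⁻¹)) (by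
      rw [v.map_mul]
      refine mul_lt_one_of_lt_of_le hvx ((v.map_sub _ _).trans ?_)
      simp [ha])
  refine ⟨_, mul_mem hconj htrans, curvePoint (Units.mk0 a ha0 * x),
    v.mem_curveNearInfinity.2 ⟨_, by simpa [ha] using hx, rfl⟩, ?_⟩
  have hcurve := diag_mul_curvePoint (Units.mk0 a ha0) x (by simpa using hg)
  simp only [Units.val_mk0] at hcurve
  change _ * _ = g * (m * curvePoint x)
  rw [mul_assoc _ (SpecialLinearGroup.transvection _ _), ← hcurve]
  group

theorem smul_congrKernel_mul_curveNearInfinity_eq {g : SL(2, K)} {a : K} (ha : v a = 1)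
    (hg : (g : Matrix (Fin 2) (Fin 2) K) = !![a, 0; 0, a⁻¹]) :
    g • ((v.congrKernel (Fin 2) : Set SL(2, K)) * v.curveNearInfinity) =
      (v.congrKernel (Fin 2) : Set SL(2, K)) * v.curveNearInfinity := by
  have ha0 : a ≠ 0 := by rintro rfl; simp at ha
  have hginv : ((g⁻¹ : SL(2, K)) : Matrix (Fin 2) (Fin 2) K) = !![a⁻¹, 0; 0, a⁻¹⁻¹] := by
    rw [Matrix.SpecialLinearGroup.coe_inv_eq_diagonal (d := ![a, a⁻¹])
      (Fin.forall_fin_two.2 ⟨ha0, inv_ne_zero ha0⟩) (hg.trans (diagonal_vec2 _ _).symm),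
      diagonal_fin_two]
    simp
  exact (v.smul_congrKernel_mul_curveNearInfinity_subset ha hg).antisymm
    (Set.subset_smul_set_iff.2
      (v.smul_congrKernel_mul_curveNearInfinity_subset (by simp [ha]) hginv))

end Valuation

/-- The `μ`-stabilizer (over a lifted residue field `k`) of the tube `μ·Q` around the
type at infinity of the curve `x ↦ [[x,0],[1,x⁻¹]]` in `SL₂` is the group of diagonal
matrices with entries in `k`. -/
theorem mu_stabilizer_torus
    {K Γ₀ : Type*} [Field K] [LinearOrderedCommGroupWithZero Γ₀]
    (v : Valuation K Γ₀) (hnt : ∃ x : K, 1 < v x)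
    (k : Subfield K) (hkO : ∀ a ∈ k, v a ≤ 1) (hkm : ∀ a ∈ k, v a < 1 → a = 0)
    (μ Q : Set (Matrix.SpecialLinearGroup (Fin 2) K))
    (hμ : μ = {m : Matrix.SpecialLinearGroup (Fin 2) K |
        ∀ i j, v ((m : Matrix (Fin 2) (Fin 2) K) i j) ≤ 1 ∧
          v (((m : Matrix (Fin 2) (Fin 2) K) - 1) i j) < 1})
    (hQ : Q = {m : Matrix.SpecialLinearGroup (Fin 2) K |
        ∃ x : K, 1 < v x ∧ (m : Matrix (Fin 2) (Fin 2) K) = !![x, 0; 1, x⁻¹]}) :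
    {g : Matrix.SpecialLinearGroup (Fin 2) K |
        (∀ i j, (g : Matrix (Fin 2) (Fin 2) K) i j ∈ k) ∧ g • (μ * Q) = μ * Q}
      = {g : Matrix.SpecialLinearGroup (Fin 2) K |
          ∃ a ∈ k, a ≠ 0 ∧ (g : Matrix (Fin 2) (Fin 2) K) = !![a, 0; 0, a⁻¹]} := by
  obtain rfl : μ = v.congrKernel (Fin 2) := hμ
  obtain rfl : Q = v.curveNearInfinity := hQ
  have hk : ∀ a ∈ k, a = 0 ∨ v a = 1 := fun a ha => (hkO a ha).lt_or_eq.imp_left (hkm a ha)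
  ext g
  constructor
  · rintro ⟨hgk, hstab⟩
    obtain ⟨x, hx⟩ := hnt
    have hx0 : x ≠ 0 := by rintro rfl; simp at hx
    have hq := v.mem_curveNearInfinity.2 ⟨Units.mk0 x hx0, hx, rfl⟩
    obtain ⟨m, hm, q, hq', hgq⟩ : g * curvePoint (Units.mk0 x hx0) ∈
        (v.congrKernel (Fin 2) : Set SL(2, K)) * v.curveNearInfinity :=
      hstab ▸ Set.smul_mem_smul_set (Set.mem_mul.2 ⟨1, one_mem _, _, hq, one_mul _⟩)
    obtain ⟨y, -, rfl⟩ := v.mem_curveNearInfinity.1 hq'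
    obtain ⟨h01, h10⟩ :=
      v.offDiag_eq_zero_of_mul_curvePoint_eq (fun i j => hk _ (hgk i j)) hm hx hgq.symm
    have hdiag := Matrix.SpecialLinearGroup.coe_fin_two_eq_of_offDiag_eq_zero h01 h10
    refine ⟨_, hgk 0 0, fun h0 => ?_, hdiag⟩
    simpa [hdiag, h0, det_fin_two_of] using g.2
  · rintro ⟨a, hak, ha0, hg⟩
    refine ⟨fun i j => ?_,
      v.smul_congrKernel_mul_curveNearInfinity_eq ((hk a hak).resolve_left ha0) hg⟩
    fin_cases i <;> fin_cases j <;> simp [hg, hak, k.inv_mem hak, k.zero_mem]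
end

section
/- Let K be a field with a valuation v : K → Γ₀, with valuation ring 𝒪 and maximal ideal 𝔪. Let g ∈ 𝒪 and let α ∈ K \ 𝒪. Set ε = g·α⁻¹ and β = (1+ε)⁻¹·α. Then ε ∈ 𝔪, 1 + ε is a unit of 𝒪, β ∈ K \ 𝒪, and the following identity of 2×2 matrices over K holds: [[1, g], [0, 1]] * [[α, 1], [0, α⁻¹]] = [[1+ε, 0], [0, (1+ε)⁻¹]] * [[β, 1], [0, β⁻¹]]. -/
namespace Valuation

variable {K Γ₀ : Type*} [Field K] [LinearOrderedCommGroupWithZero Γ₀] (v : Valuation K Γ₀)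

theorem map_mul_inv_lt_one_of_lt {x y : K} (h : v x < v y) : v (x * y⁻¹) < 1 := by
  have hy : v y ≠ 0 := (zero_le.trans_lt h).ne'
  rw [map_mul, map_inv, ← div_eq_mul_inv, div_lt_one₀ (zero_lt_iff.mpr hy)]
  exact h

theorem map_inv_mul_of_map_eq_one {u : K} (hu : v u = 1) (x : K) : v (u⁻¹ * x) = v x := by
  rw [map_mul, map_inv, hu, inv_one, one_mul]

end Valuation

namespace Matrix

variable {K : Type*} [Field K]

theorem unipotent_mul_eq (g x : K) :
    !![1, g; 0, 1] * !![x, 1; 0, x⁻¹] = !![x, 1 + g * x⁻¹; 0, x⁻¹] := by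
  simp

theorem diagonal_mul_eq {u : K} (hu : u ≠ 0) (x : K) :
    !![u, 0; 0, u⁻¹] * !![u⁻¹ * x, 1; 0, (u⁻¹ * x)⁻¹] = !![x, u; 0, x⁻¹] := by
  simp [hu, mul_left_comm u⁻¹]

end Matrix

/-- The matrix computation of Example 2.6: multiplying a point at infinity of the
curve `x ↦ [[x,1],[0,x⁻¹]]` by a unipotent matrix with entry `g ∈ 𝒪` moves it by an
element of `μ` to another point of the curve. -/
theorem unipotent_matrix_identity
    {K Γ₀ : Type*} [Field K] [LinearOrderedCommGroupWithZero Γ₀]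
    (v : Valuation K Γ₀) (g α : K) (hg : v g ≤ 1) (hα : 1 < v α)
    (ε β : K) (hε : ε = g * α⁻¹) (hβ : β = (1 + ε)⁻¹ * α) :
    v ε < 1 ∧ v (1 + ε) = 1 ∧ 1 < v β ∧
      (!![1, g; 0, 1] : Matrix (Fin 2) (Fin 2) K) * !![α, 1; 0, α⁻¹] =
        !![1 + ε, 0; 0, (1 + ε)⁻¹] * !![β, 1; 0, β⁻¹] := by
  have hε_lt : v ε < 1 := hε ▸ v.map_mul_inv_lt_one_of_lt (hg.trans_lt hα)
  have hunit : v (1 + ε) = 1 := v.map_one_add_of_lt hε_lt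
  have hne : 1 + ε ≠ 0 := v.ne_zero_iff.mp (hunit ▸ one_ne_zero)
  refine ⟨hε_lt, hunit, ?_, ?_⟩
  · rwa [hβ, v.map_inv_mul_of_map_eq_one hunit]
  · rw [Matrix.unipotent_mul_eq, hβ, Matrix.diagonal_mul_eq hne, hε]
end

section
/- Let K be a field with a valuation v : K → Γ₀, with valuation ring 𝒪 and maximal ideal 𝔪, and let k ⊆ 𝒪 be an infinite subfield with k ∩ 𝔪 = {0}. Suppose k ⊆ C₁ ∪ … ∪ C_m, where each Cᵢ is a ball in K (a set of the form {x : v(x − c) ≤ γ} or {x : v(x − c) < γ} with c ∈ K and nonzero γ ∈ Γ₀). Then 𝒪 ⊆ Cᵢ for some i. -/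
/-!
By pigeonhole, one ball `C i` contains two distinct points `a, b` of the infinite set `k`.
Since `k` meets `𝔪` only in `0`, `v (a - b) = 1`, so by the ultrametric inequality the radius
of `C i` is at least `1`; as `a ∈ 𝒪` and every point of a ball is a centre of it, `𝒪 ⊆ C i`.
-/

theorem Set.Infinite.exists_ne_mem_of_subset_iUnion {α ι : Type*} [Finite ι] {s : Set α}
    (hs : s.Infinite) {C : ι → Set α} (hcover : s ⊆ ⋃ i, C i) :
    ∃ i, ∃ a ∈ s, ∃ b ∈ s, a ≠ b ∧ a ∈ C i ∧ b ∈ C i := by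
  have : Infinite s := hs.to_subtype
  choose f hf using fun x : s => Set.mem_iUnion.1 (hcover x.2)
  obtain ⟨⟨a, ha⟩, ⟨b, hb⟩, hab, hfab⟩ := Finite.exists_ne_map_eq_of_infinite f
  exact ⟨f ⟨a, ha⟩, a, ha, b, hb, fun h => hab (Subtype.ext h), hf _, hfab ▸ hf _⟩

theorem Valuation.map_sub_le_max_of_one_le_map_sub {R Γ₀ : Type*} [Ring R]
    [LinearOrderedCommMonoidWithZero Γ₀] (v : Valuation R Γ₀) {x a b : R} (c : R)
    (hx : v x ≤ 1) (ha : v a ≤ 1) (hab : 1 ≤ v (a - b)) :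
    v (x - c) ≤ max (v (a - c)) (v (b - c)) := by
  have hxa : v (x - a) ≤ max (v (a - c)) (v (b - c)) :=
    calc v (x - a) ≤ 1 := v.map_sub_le hx ha
      _ ≤ v (a - b) := hab
      _ = v ((a - c) - (b - c)) := by rw [sub_sub_sub_cancel_right]
      _ ≤ max (v (a - c)) (v (b - c)) := v.map_sub _ _
  rw [← sub_add_sub_cancel x a c]
  exact v.map_add_le hxa (le_max_left _ _)

/-- If an infinite lifted copy `k` of the residue field is covered by finitely many
balls, then one of the balls contains the whole valuation ring. -/
theorem valuation_ring_in_ball_of_cover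
    {K Γ₀ : Type*} [Field K] [LinearOrderedCommGroupWithZero Γ₀]
    (v : Valuation K Γ₀)
    (k : Subfield K) (hkO : ∀ a ∈ k, v a ≤ 1) (hkm : ∀ a ∈ k, v a < 1 → a = 0)
    (hinf : (k : Set K).Infinite)
    (m : ℕ) (C : Fin m → Set K)
    (hC : ∀ i : Fin m,
      (∃ c : K, ∃ γ : Γ₀, γ ≠ 0 ∧ C i = {x : K | v (x - c) ≤ γ}) ∨
      (∃ c : K, ∃ γ : Γ₀, γ ≠ 0 ∧ C i = {x : K | v (x - c) < γ}))
    (hcover : (k : Set K) ⊆ ⋃ i : Fin m, C i) :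
    ∃ i : Fin m, {x : K | v x ≤ 1} ⊆ C i := by
  obtain ⟨i, a, ha, b, hb, hab, haC, hbC⟩ := hinf.exists_ne_mem_of_subset_iUnion hcover
  have hsep : 1 ≤ v (a - b) :=
    not_lt.1 fun hlt => hab (sub_eq_zero.1 (hkm _ (sub_mem ha hb) hlt))
  refine ⟨i, fun x (hx : v x ≤ 1) => ?_⟩
  rcases hC i with ⟨c, γ, -, hCi⟩ | ⟨c, γ, -, hCi⟩ <;> rw [hCi] at haC hbC ⊢
  · exact (v.map_sub_le_max_of_one_le_map_sub c hx (hkO a ha) hsep).trans (max_le haC hbC)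
  · exact (v.map_sub_le_max_of_one_le_map_sub c hx (hkO a ha) hsep).trans_lt (max_lt haC hbC)
end

section
/- Let k be a field and let r be a positive irrational real number. In the field of Hahn series k((t^ℝ)) with value group ℝ and coefficients in k, the element t⁻¹ + t^r (i.e. the sum of the monomial with exponent −1 and coefficient 1 and the monomial with exponent r and coefficient 1) is transcendental over the k-subalgebra generated by t⁻¹ (the monomial with exponent −1 and coefficient 1). -/
/-!
Every element of `k[t⁻¹]` is supported on `-ℕ`, so for a polynomial `p` over `k[t⁻¹]` the `i`-th
term `pᵢ · t^(i r)` of `p(t^r)` is supported on `-ℕ + i r`. As `r` is irrational these sets are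
pairwise disjoint, so `p(t^r) = 0` forces every term, hence every coefficient, to vanish. Thus
`t^r` is transcendental over `k[t⁻¹]`, and so is its translate `t⁻¹ + t^r` by an element of
`k[t⁻¹]`.
-/

open Polynomial
open scoped HahnSeries

namespace HahnSeries

variable {Γ R : Type*}

theorem eq_zero_of_sum_eq_zero_of_pairwiseDisjoint [PartialOrder Γ] [AddCommMonoid R]
    {ι : Type*} {s : Finset ι} {f : ι → R⟦Γ⟧}
    (hf : (s : Set ι).PairwiseDisjoint fun i => (f i).support) (hsum : ∑ i ∈ s, f i = 0)
    {i : ι} (hi : i ∈ s) : f i = 0 := by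
  ext a
  by_contra ha
  have hcoeff := congr_arg (coeff · a) hsum
  simp only [coeff_sum, coeff_zero] at hcoeff
  rw [Finset.sum_eq_single_of_mem i hi fun j hj hji => ?_] at hcoeff
  · exact ha hcoeff
  by_contra hja
  exact Set.disjoint_left.1 (hf hj hi hji) hja ha

variable [AddCommMonoid Γ] [PartialOrder Γ] [IsOrderedCancelAddMonoid Γ]

theorem support_mul_single_subset [NonUnitalNonAssocSemiring R] (x : R⟦Γ⟧) (g : Γ) (r : R) :
    (x * single g r).support ⊆ (· + g) '' x.support := by
  rintro _ hc
  obtain ⟨a, ha, b, hb, rfl⟩ := support_mul_subset hc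
  rw [support_single_subset hb]
  exact ⟨a, ha, rfl⟩

section Semiring

variable [Semiring R]

theorem mul_single_one_eq_zero_iff {x : R⟦Γ⟧} {g : Γ} : x * single g 1 = 0 ↔ x = 0 := by
  refine ⟨fun h => ?_, fun h => by rw [h, zero_mul]⟩
  ext a
  simpa [coeff_mul_single_add] using congr_arg (coeff · (a + g)) h

def supportedIn (M : AddSubmonoid Γ) : Subsemiring R⟦Γ⟧ where
  carrier := {x | x.support ⊆ M}
  mul_mem' {x y} hx hy := by
    rintro _ hc
    obtain ⟨a, ha, b, hb, rfl⟩ := support_mul_subset hc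
    exact M.add_mem (hx ha) (hy hb)
  one_mem' := by
    rw [← single_zero_one]
    rintro _ h
    rw [support_single_subset h]
    exact M.zero_mem
  add_mem' hx hy := (support_add_subset _ _).trans (Set.union_subset hx hy)
  zero_mem' := by simp

theorem mem_supportedIn {M : AddSubmonoid Γ} {x : R⟦Γ⟧} :
    x ∈ supportedIn M ↔ x.support ⊆ M :=
  Iff.rfl

theorem single_mem_supportedIn {M : AddSubmonoid Γ} {a : Γ} (ha : a ∈ M) (r : R) :
    single a r ∈ supportedIn M := by
  rintro _ h
  rwa [support_single_subset h]

theorem mem_supportedIn_of_mem_adjoin {K : Type*} [CommSemiring K] [Algebra K R⟦Γ⟧]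
    {M : AddSubmonoid Γ} (hK : ∀ c : K, algebraMap K R⟦Γ⟧ c ∈ supportedIn M)
    {s : Set R⟦Γ⟧} (hs : ∀ y ∈ s, y ∈ supportedIn M) {x : R⟦Γ⟧}
    (hx : x ∈ Algebra.adjoin K s) : x ∈ supportedIn M :=
  Algebra.adjoin_le (S := { supportedIn M with algebraMap_mem' := hK }) hs hx

end Semiring

theorem transcendental_single_one [Ring R] {S : Type*} [CommRing S] [Algebra S R⟦Γ⟧]
    (hinj : Function.Injective (algebraMap S R⟦Γ⟧)) {M : AddSubmonoid Γ}
    (hS : ∀ s : S, algebraMap S R⟦Γ⟧ s ∈ supportedIn M) {g : Γ}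
    (hg : ∀ a ∈ M, ∀ b ∈ M, ∀ i j : ℕ, a + i • g = b + j • g → i = j) :
    Transcendental S (single g (1 : R)) := by
  rw [transcendental_iff]
  intro p hp
  set term : ℕ → R⟦Γ⟧ := fun i => algebraMap S R⟦Γ⟧ (p.coeff i) * single (i • g) 1
  have hsum : ∑ i ∈ Finset.range (p.natDegree + 1), term i = 0 := by
    simpa [aeval_eq_sum_range, Algebra.smul_def, single_pow, term] using hp
  have hsupport : ∀ i, (term i).support ⊆ (· + i • g) '' M := fun i =>
    (support_mul_single_subset _ _ _).trans (Set.image_mono (mem_supportedIn.1 (hS _)))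
  have hdisj : ((Finset.range (p.natDegree + 1) : Finset ℕ) : Set ℕ).PairwiseDisjoint
      fun i => (term i).support := by
    intro i _ j _ hij
    refine Set.disjoint_left.2 fun c hci hcj => hij ?_
    obtain ⟨a, ha, rfl⟩ := hsupport i hci
    obtain ⟨b, hb, hab⟩ := hsupport j hcj
    exact hg a ha b hb i j hab.symm
  refine Polynomial.ext fun i => ?_
  rw [Polynomial.coeff_zero]
  rcases lt_or_ge p.natDegree i with hi | hi
  · exact coeff_eq_zero_of_natDegree_lt hi
  · refine hinj ?_
    rw [map_zero]
    exact mul_single_one_eq_zero_iff.1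
      (eq_zero_of_sum_eq_zero_of_pairwiseDisjoint hdisj hsum (Finset.mem_range_succ_iff.2 hi))

end HahnSeries

theorem Transcendental.algebraMap_add {R A : Type*} [CommRing R] [Nontrivial R] [Ring A]
    [Algebra R A] {x : A} (hx : Transcendental R x) (a : R) :
    Transcendental R (algebraMap R A a + x) := by
  have := hx.aeval (X + C a) (by rw [natDegree_X_add_C]; exact one_ne_zero)
    (by rw [(monic_X_add_C a).leadingCoeff]; exact one_mem _)
  rwa [map_add, aeval_X, aeval_C, add_comm] at this

theorem Irrational.eq_of_intCast_add_nsmul_eq {r : ℝ} (hr : Irrational r) {a b : ℤ} {i j : ℕ}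
    (h : (a : ℝ) + i • r = b + j • r) : i = j := by
  by_contra hij
  refine (hr.intCast_mul (m := (i : ℤ) - j) (by omega)).ne_int (b - a) ?_
  push_cast
  simp only [nsmul_eq_mul] at h
  linarith

theorem hahn_series_transcendental_general
    {k : Type*} [Field k] (r : ℝ) (hirr : Irrational r) :
    Transcendental
      (Algebra.adjoin k {(HahnSeries.single (-1 : ℝ) (1 : k) : HahnSeries ℝ k)})
      (HahnSeries.single (-1 : ℝ) (1 : k) + HahnSeries.single r (1 : k)) := by
  set S := Algebra.adjoin k {(HahnSeries.single (-1 : ℝ) (1 : k) : HahnSeries ℝ k)}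
  set M := AddSubmonoid.closure {(-1 : ℝ)}
  -- As `ℝ` is a semiring, the `Algebra k k⟦ℝ⟧` instance here is the one through `PowerSeries k`.
  have hk : ∀ c : k, algebraMap k k⟦ℝ⟧ c ∈ HahnSeries.supportedIn M := fun c => by
    rw [HahnSeries.algebraMap_apply', PowerSeries.algebraMap_apply, Algebra.algebraMap_self,
      RingHom.id_apply, HahnSeries.ofPowerSeries_C]
    exact HahnSeries.single_mem_supportedIn M.zero_mem c
  have hS : ∀ s : S, algebraMap S k⟦ℝ⟧ s ∈ HahnSeries.supportedIn M := by
    refine fun s => HahnSeries.mem_supportedIn_of_mem_adjoin hk ?_ s.2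
    rintro _ rfl
    exact HahnSeries.single_mem_supportedIn (AddSubmonoid.subset_closure (Set.mem_singleton _)) 1
  have hy : Transcendental S (HahnSeries.single r (1 : k)) := by
    refine HahnSeries.transcendental_single_one Subtype.val_injective hS fun a ha b hb i j h => ?_
    obtain ⟨m, rfl⟩ := AddSubmonoid.mem_closure_singleton.1 ha
    obtain ⟨n, rfl⟩ := AddSubmonoid.mem_closure_singleton.1 hb
    exact hirr.eq_of_intCast_add_nsmul_eq (a := -m) (b := -n) (by push_cast; simpa using h)
  exact hy.algebraMap_add ⟨_, Algebra.subset_adjoin rfl⟩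

/-- In the Hahn series field `k((t^ℝ))`, for `r` a positive irrational real, the
element `t⁻¹ + t^r` is transcendental over the `k`-subalgebra generated by `t⁻¹`. -/
theorem hahn_series_transcendental
    {k : Type*} [Field k] (r : ℝ) (hr : 0 < r) (hirr : Irrational r) :
    Transcendental
      (Algebra.adjoin k {(HahnSeries.single (-1 : ℝ) (1 : k) : HahnSeries ℝ k)})
      (HahnSeries.single (-1 : ℝ) (1 : k) + HahnSeries.single r (1 : k)) :=
  hahn_series_transcendental_general r hirr
end
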